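/- arXiv:1705.01586 — 3 statements merged into one kernel-verified Lean document; each statement's English description precedes it below -/
import Mathlib

section
/- Let G be a nontrivial torsion-free group in which every non-identity element lies in a unique maximal cyclic subgroup. Then the set of maximal cyclic subgroups of G either has exactly one element or is infinite; equivalently, if G has only finitely many maximal cyclic subgroups, then G is cyclic. -/
/-- The power graph of a group `G`: distinct `x, y` are adjacent iff one is a
nonzero integer power of the other. -/
def powerGraph (G : Type*) [Group G] : SimpleGraph G where
  Adj x y := x ≠ y ∧ ∃ n : ℤ, n ≠ 0 ∧ (y = x ^ n ∨ x = y ^ n)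
  symm := ⟨by
    rintro x y ⟨hxy, n, hn, h⟩
    exact ⟨hxy.symm, n, hn, h.symm⟩⟩
  loopless := ⟨by rintro x ⟨h, -⟩; exact h rfl⟩

/-- There is an arc `x → y` in the directed power graph iff `x ≠ y` and `y` is a
nonzero integer power of `x`. -/
def powArc {G : Type*} [Group G] (x y : G) : Prop :=
  x ≠ y ∧ ∃ n : ℤ, n ≠ 0 ∧ y = x ^ n

/-- A maximal cyclic subgroup: a cyclic subgroup not properly contained in any
cyclic subgroup. -/
def IsMaxCyclic {G : Type*} [Group G] (C : Subgroup G) : Prop :=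
  IsCyclic C ∧ ∀ D : Subgroup G, IsCyclic D → C ≤ D → C = D

/-!
Suppose there are only finitely many maximal cyclic subgroups and let `M` be the one containing
some `y ≠ 1`. For any `x`, infinitely many of the elements `x * y ^ n` are nontrivial as `y` has
infinite order, so by pigeonhole two of them, `x * y ^ n` and `x * y ^ m` with `n ≠ m`, lie in a
common maximal cyclic subgroup `C`. Then `C` contains `y ^ (m - n) ≠ 1`, which also lies in `M`,
so `C = M` by uniqueness, and `x = (x * y ^ n) * y ^ (-n) ∈ M`. Hence `G = M` is cyclic.
-/

section

variable {G : Type*} [Group G]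

theorem isMaxCyclic_iff_eq_top [IsCyclic G] {C : Subgroup G} : IsMaxCyclic C ↔ C = ⊤ := by
  have htop : IsCyclic (⊤ : Subgroup G) :=
    isCyclic_of_surjective _ Subgroup.topEquiv.symm.surjective
  exact ⟨fun hC => hC.2 ⊤ htop le_top,
    by rintro rfl; exact ⟨htop, fun D _ h => (top_le_iff.mp h).symm⟩⟩

theorem IsMaxCyclic.eq_top_of_finite (hfin : {C : Subgroup G | IsMaxCyclic C}.Finite)
    (hG : ∀ g : G, g ≠ 1 → ∃! C : Subgroup G, IsMaxCyclic C ∧ g ∈ C)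
    {M : Subgroup G} (hM : IsMaxCyclic M) {y : G} (hy : ¬ IsOfFinOrder y) (hyM : y ∈ M) :
    M = ⊤ := by
  refine (Subgroup.eq_top_iff' M).mpr fun x => ?_
  have hinj : Function.Injective fun n : ℤ => x * y ^ n :=
    (mul_right_injective x).comp (injective_zpow_iff_not_isOfFinOrder.mpr hy)
  have hne_one : {n : ℤ | x * y ^ n ≠ 1}.Infinite :=
    (show {n : ℤ | x * y ^ n = 1}.Subsingleton from
      fun a ha b hb => hinj (ha.trans hb.symm)).finite.infinite_compl
  have hcover : {n : ℤ | x * y ^ n ≠ 1} ⊆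
      ⋃ C ∈ {C : Subgroup G | IsMaxCyclic C}, {n : ℤ | x * y ^ n ∈ C} := by
    intro n hn
    obtain ⟨C, ⟨hC, hnC⟩, -⟩ := hG _ hn
    exact Set.mem_biUnion hC hnC
  obtain ⟨C, hC, hCinf⟩ : ∃ C ∈ {C : Subgroup G | IsMaxCyclic C},
      {n : ℤ | x * y ^ n ∈ C}.Infinite := by
    by_contra! h
    exact hne_one ((hfin.biUnion h).subset hcover)
  obtain ⟨n, hn, m, hm, hnm⟩ := hCinf.nontrivial
  have hpow_mem : y ^ (m - n) ∈ C := by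
    have h := C.mul_mem (C.inv_mem hn) hm
    rwa [show (x * y ^ n)⁻¹ * (x * y ^ m) = y ^ (m - n) by group] at h
  have hpow_ne : y ^ (m - n) ≠ 1 := fun h =>
    sub_ne_zero.mpr hnm.symm (injective_zpow_iff_not_isOfFinOrder.mpr hy (by simpa using h))
  have hCM : C = M := (hG _ hpow_ne).unique ⟨hC, hpow_mem⟩ ⟨hM, M.zpow_mem hyM _⟩
  have hnM : x * y ^ n ∈ M := hCM ▸ hn
  simpa using M.mul_mem hnM (M.zpow_mem hyM (-n))

theorem isCyclic_of_finite_isMaxCyclic (htf : ∀ g : G, g ≠ 1 → ¬ IsOfFinOrder g)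
    (hG : ∀ g : G, g ≠ 1 → ∃! C : Subgroup G, IsMaxCyclic C ∧ g ∈ C)
    (hfin : {C : Subgroup G | IsMaxCyclic C}.Finite) : IsCyclic G := by
  rcases subsingleton_or_nontrivial G with _ | _
  · infer_instance
  obtain ⟨y, hy⟩ := exists_ne (1 : G)
  obtain ⟨M, ⟨hM, hyM⟩, -⟩ := hG y hy
  have hMtop : M = ⊤ := hM.eq_top_of_finite hfin hG (htf y hy) hyM
  have : IsCyclic M := hM.1
  subst hMtop
  exact isCyclic_of_surjective _ Subgroup.topEquiv.surjective

end

theorem stmt_10_general (G : Type*) [Group G]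
    (htf : ∀ g : G, g ≠ 1 → ¬ IsOfFinOrder g)
    (hG : ∀ g : G, g ≠ 1 → ∃! C : Subgroup G, IsMaxCyclic C ∧ g ∈ C) :
    ((∃! C : Subgroup G, IsMaxCyclic C) ∨
        {C : Subgroup G | IsMaxCyclic C}.Infinite) ∧
      ({C : Subgroup G | IsMaxCyclic C}.Finite → IsCyclic G) := by
  by_cases hfin : {C : Subgroup G | IsMaxCyclic C}.Finite
  · have := isCyclic_of_finite_isMaxCyclic htf hG hfin
    exact ⟨.inl ⟨⊤, isMaxCyclic_iff_eq_top.mpr rfl, fun _ => isMaxCyclic_iff_eq_top.mp⟩,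
      fun _ => this⟩
  · exact ⟨.inr hfin, fun h => absurd h hfin⟩

/-- If `G` is a nontrivial torsion-free group in which every non-identity
element lies in a unique maximal cyclic subgroup, then the set of maximal cyclic
subgroups of `G` has exactly one element or is infinite; equivalently, if it is
finite then `G` is cyclic. -/
theorem stmt_10 (G : Type*) [Group G] [Nontrivial G]
    (htf : ∀ g : G, g ≠ 1 → ¬ IsOfFinOrder g)
    (hG : ∀ g : G, g ≠ 1 → ∃! C : Subgroup G, IsMaxCyclic C ∧ g ∈ C) :
    ((∃! C : Subgroup G, IsMaxCyclic C) ∨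
        {C : Subgroup G | IsMaxCyclic C}.Infinite) ∧
      ({C : Subgroup G | IsMaxCyclic C}.Finite → IsCyclic G) :=
  stmt_10_general G htf hG
end

section
/- Let G₁ and G₂ be countable torsion-free groups, neither of which is cyclic, such that in each of G₁ and G₂ every non-identity element lies in a unique maximal cyclic subgroup. Then the power graphs P(G₁) and P(G₂) are isomorphic. In particular, the groups ℤⁿ for all integers n ≥ 2 have pairwise isomorphic power graphs. -/
universe u v

/-- The power graph of an additive group `G`: distinct `x, y` are adjacent iff
one is a nonzero integer multiple of the other. -/
def addPowerGraph (G : Type*) [AddGroup G] : SimpleGraph G where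
  Adj x y := x ≠ y ∧ ∃ n : ℤ, n ≠ 0 ∧ (y = n • x ∨ x = n • y)
  symm := ⟨by
    rintro x y ⟨hxy, n, hn, h⟩
    exact ⟨hxy.symm, n, hn, h.symm⟩⟩
  loopless := ⟨by rintro x ⟨h, -⟩; exact h rfl⟩

/-- There is an arc `x → y` in the directed power graph of an additive group iff
`x ≠ y` and `y` is a nonzero integer multiple of `x`. -/
def addPowArc {G : Type*} [AddGroup G] (x y : G) : Prop :=
  x ≠ y ∧ ∃ n : ℤ, n ≠ 0 ∧ y = n • x

/-! If every `g ≠ 1` lies in a unique maximal cyclic subgroup and there is no torsion, then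
`G ∖ {1}` is the disjoint union of the sets `⟨c⟩ ∖ {1}`, one for each maximal cyclic subgroup
`⟨c⟩ ≅ ℤ`, and `g` is adjacent to `h` in the power graph only inside one block, where it is
divisibility of exponents. So the power graph is an isolated vertex plus one copy of the
divisibility graph of `ℤ ∖ {0}` per maximal cyclic subgroup. There are countably many of these,
and infinitely many when `G` is not cyclic: if `d ∉ ⟨c⟩`, the elements `c d^k` lie in pairwise
distinct blocks. Hence all such power graphs are isomorphic. The groups `ℤⁿ` qualify because
the maximal cyclic subgroup through `a ≠ 0` is generated by `a / gcd(a)`. -/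

open Subgroup

variable {G ι κ : Type*} [Group G]

theorem exists_notMem_zpowers_of_not_isCyclic (hG : ¬IsCyclic G) (x : G) :
    ∃ d, d ∉ zpowers x := by
  by_contra! h
  exact hG (isCyclic_iff_exists_zpowers_eq_top.2 ⟨x, eq_top_iff.2 fun d _ => h d⟩)

structure IsZPowersPartition (c : ι → G) : Prop where
  not_isOfFinOrder : ∀ i, ¬IsOfFinOrder (c i)
  existsUnique_mem_zpowers : ∀ g : G, g ≠ 1 → ∃! i, g ∈ zpowers (c i)

namespace IsZPowersPartition

variable {c : ι → G}

theorem zpow_ne_one (hc : IsZPowersPartition c) (i : ι) {k : ℤ} (hk : k ≠ 0) : c i ^ k ≠ 1 :=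
  fun h => hc.not_isOfFinOrder i (isOfFinOrder_iff_zpow_eq_one.2 ⟨k, hk, h⟩)

theorem ne_one (hc : IsZPowersPartition c) (i : ι) : c i ≠ 1 := by
  simpa using hc.zpow_ne_one i one_ne_zero

theorem zpow_injective (hc : IsZPowersPartition c) (i : ι) :
    Function.Injective fun k : ℤ => c i ^ k :=
  injective_zpow_iff_not_isOfFinOrder.2 (hc.not_isOfFinOrder i)

theorem eq_of_mem_zpowers (hc : IsZPowersPartition c) {g : G} (hg : g ≠ 1) {i j : ι}
    (hi : g ∈ zpowers (c i)) (hj : g ∈ zpowers (c j)) : i = j :=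
  (hc.existsUnique_mem_zpowers g hg).unique hi hj

theorem injective (hc : IsZPowersPartition c) : Function.Injective c := fun i j h =>
  hc.eq_of_mem_zpowers (hc.ne_one i) (mem_zpowers (c i)) (h ▸ mem_zpowers (c j))

theorem comp_equiv (hc : IsZPowersPartition c) (e : κ ≃ ι) : IsZPowersPartition (c ∘ e) :=
  ⟨fun k => hc.not_isOfFinOrder (e k),
    fun g hg => e.existsUnique_congr_right.2 (hc.existsUnique_mem_zpowers g hg)⟩

theorem zpow_mem_zpowers_iff (hc : IsZPowersPartition c) {g : G} {k : ℤ} (hk : k ≠ 0) {i : ι} :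
    g ^ k ∈ zpowers (c i) ↔ g ∈ zpowers (c i) := by
  refine ⟨fun hgk => ?_, fun hg => zpow_mem hg k⟩
  by_cases hg : g = 1
  · rw [hg]
    exact one_mem _
  obtain ⟨j, hj, -⟩ := hc.existsUnique_mem_zpowers g hg
  obtain ⟨m, rfl⟩ := mem_zpowers_iff.1 hj
  have hm : m ≠ 0 := by
    rintro rfl
    exact hg (zpow_zero _)
  have hgk_ne : (c j ^ m) ^ k ≠ 1 := by
    rw [← zpow_mul]
    exact hc.zpow_ne_one j (mul_ne_zero hm hk)
  rwa [hc.eq_of_mem_zpowers hgk_ne hgk (zpow_mem hj k)]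

theorem infinite (hc : IsZPowersPartition c) (hG : ¬IsCyclic G) : Infinite ι := by
  obtain ⟨i₀⟩ : Nonempty ι := by
    obtain ⟨g, hg⟩ := exists_notMem_zpowers_of_not_isCyclic hG 1
    rw [zpowers_one_eq_bot, mem_bot] at hg
    exact ⟨(hc.existsUnique_mem_zpowers g hg).exists.choose⟩
  set x := c i₀
  have hx : x ≠ 1 := hc.ne_one i₀
  obtain ⟨d, hd⟩ := exists_notMem_zpowers_of_not_isCyclic hG x
  have hne : ∀ k : ℤ, x * d ^ k ≠ 1 := by
    intro k h
    by_cases hk : k = 0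
    · exact hx (by simpa [hk] using h)
    · refine hd ((hc.zpow_mem_zpowers_iff hk).1 ?_)
      rw [eq_inv_of_mul_eq_one_right h]
      exact inv_mem (mem_zpowers x)
  choose f hf using fun k => (hc.existsUnique_mem_zpowers _ (hne k)).exists
  -- If `x d^k` and `x d^l` share a block, so do `d^(l-k)`, `d` and `x`; but `d ∉ ⟨x⟩`.
  refine Infinite.of_injective f fun k l hkl => by_contra fun hkl' => hd ?_
  have hxk := hf k
  rw [hkl] at hxk
  have hdl : d ∈ zpowers (c (f l)) := by
    rw [← hc.zpow_mem_zpowers_iff (sub_ne_zero.2 (Ne.symm hkl'))]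
    have : d ^ (l - k) = (x * d ^ k)⁻¹ * (x * d ^ l) := by group
    rw [this]
    exact mul_mem (inv_mem hxk) (hf l)
  have hxl : x ∈ zpowers (c (f l)) := by
    have : x = x * d ^ l * (d ^ l)⁻¹ := by group
    rw [this]
    exact mul_mem (hf l) (inv_mem (zpow_mem hdl l))
  rwa [hc.eq_of_mem_zpowers hx hxl (mem_zpowers x)] at hdl

end IsZPowersPartition

def ModelArc : Option (ι × {k : ℤ // k ≠ 0}) → Option (ι × {k : ℤ // k ≠ 0}) → Prop
  | some (i, k), some (j, l) => i = j ∧ (k : ℤ) ∣ l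
  | _, _ => False

/-- `none` is isolated, and the vertices `some (i, ·)` form a copy of the divisibility graph
on `ℤ ∖ {0}`. -/
def powerGraphModel (ι : Type*) : SimpleGraph (Option (ι × {k : ℤ // k ≠ 0})) :=
  .fromRel ModelArc

def ofModel (c : ι → G) : Option (ι × {k : ℤ // k ≠ 0}) → G
  | none => 1
  | some (i, k) => c i ^ (k : ℤ)

namespace IsZPowersPartition

variable {c : ι → G}

theorem bijective_ofModel (hc : IsZPowersPartition c) : Function.Bijective (ofModel c) := by
  constructor
  · rintro (_ | ⟨i, k, hk⟩) (_ | ⟨j, l, hl⟩) h <;> simp only [ofModel] at h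
    · rfl
    · exact absurd h.symm (hc.zpow_ne_one j hl)
    · exact absurd h (hc.zpow_ne_one i hk)
    · obtain rfl := hc.eq_of_mem_zpowers (hc.zpow_ne_one i hk) (zpow_mem_zpowers _ _)
        (by rw [h]; exact zpow_mem_zpowers _ _)
      obtain rfl := hc.zpow_injective i h
      rfl
  · intro g
    by_cases hg : g = 1
    · exact ⟨none, hg.symm⟩
    obtain ⟨i, hi, -⟩ := hc.existsUnique_mem_zpowers g hg
    obtain ⟨k, rfl⟩ := mem_zpowers_iff.1 hi
    exact ⟨some (i, ⟨k, by rintro rfl; exact hg (zpow_zero _)⟩), rfl⟩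

theorem exists_zpow_ofModel_iff (hc : IsZPowersPartition c) {x y : Option (ι × {k : ℤ // k ≠ 0})}
    (hxy : x ≠ y) : (∃ n : ℤ, n ≠ 0 ∧ ofModel c y = ofModel c x ^ n) ↔ ModelArc x y := by
  rcases x with _ | ⟨i, k, hk⟩ <;> rcases y with _ | ⟨j, l, hl⟩
  · exact absurd rfl hxy
  · simp [ofModel, ModelArc, hc.zpow_ne_one j hl]
  · simp only [ofModel, ModelArc, ← zpow_mul, iff_false]
    exact fun ⟨n, hn, h⟩ => hc.zpow_ne_one i (mul_ne_zero hk hn) h.symm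
  · simp only [ofModel, ModelArc, ← zpow_mul]
    constructor
    · rintro ⟨n, hn, h⟩
      obtain rfl : i = j := hc.eq_of_mem_zpowers (hc.zpow_ne_one j hl)
        (h ▸ zpow_mem_zpowers _ _) (zpow_mem_zpowers _ _)
      exact ⟨rfl, n, hc.zpow_injective i h⟩
    · rintro ⟨rfl, n, rfl⟩
      exact ⟨n, right_ne_zero_of_mul hl, rfl⟩

noncomputable def powerGraphModelIso (hc : IsZPowersPartition c) :
    powerGraphModel ι ≃g powerGraph G where
  toEquiv := Equiv.ofBijective _ hc.bijective_ofModel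
  map_rel_iff' {x y} := by
    simp only [Equiv.ofBijective_apply, powerGraph, powerGraphModel, SimpleGraph.fromRel_adj,
      hc.bijective_ofModel.injective.ne_iff]
    refine and_congr_right fun hxy => ?_
    rw [← hc.exists_zpow_ofModel_iff hxy, ← hc.exists_zpow_ofModel_iff hxy.symm]
    simp only [and_or_left, exists_or]

end IsZPowersPartition

theorem exists_isZPowersPartition_of_isMaxCyclic (htf : ∀ g : G, g ≠ 1 → ¬IsOfFinOrder g)
    (hu : ∀ g : G, g ≠ 1 → ∃! C : Subgroup G, IsMaxCyclic C ∧ g ∈ C) :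
    ∃ c : {C : Subgroup G // IsMaxCyclic C ∧ C ≠ ⊥} → G, IsZPowersPartition c := by
  choose c hc using fun C : {C : Subgroup G // IsMaxCyclic C ∧ C ≠ ⊥} =>
    (C.1.isCyclic_iff_exists_zpowers_eq_top).1 C.2.1.1
  refine ⟨c, ⟨fun C => htf _ fun h => C.2.2 ?_, fun g hg => ?_⟩⟩
  · rw [← hc, h, zpowers_one_eq_bot]
  · obtain ⟨C, ⟨hC, hgC⟩, huniq⟩ := hu g hg
    have hC_ne : C ≠ ⊥ := fun h => hg (by rwa [h, mem_bot] at hgC)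
    exact ⟨⟨C, hC, hC_ne⟩, by simpa only [hc] using hgC,
      fun D hD => Subtype.ext (huniq D.1 ⟨D.2.1, hc D ▸ hD⟩)⟩

theorem IsZPowersPartition.nonempty_powerGraph_iso_model_nat [Countable G] {c : ι → G}
    (hc : IsZPowersPartition c) (hG : ¬IsCyclic G) :
    Nonempty (powerGraph G ≃g powerGraphModel ℕ) := by
  have := hc.infinite hG
  have := hc.injective.countable
  obtain ⟨e⟩ := nonempty_equiv_of_countable (α := ι) (β := ℕ)
  exact ⟨(hc.comp_equiv e.symm).powerGraphModelIso.symm⟩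

theorem nonempty_powerGraph_iso_model_nat [Countable G] (htf : ∀ g : G, g ≠ 1 → ¬IsOfFinOrder g)
    (hG : ¬IsCyclic G) (hu : ∀ g : G, g ≠ 1 → ∃! C : Subgroup G, IsMaxCyclic C ∧ g ∈ C) :
    Nonempty (powerGraph G ≃g powerGraphModel ℕ) :=
  let ⟨_, hc⟩ := exists_isZPowersPartition_of_isMaxCyclic htf hu
  hc.nonempty_powerGraph_iso_model_nat hG

theorem existsUnique_isMaxCyclic_of_forall_mem_zpowers {g c : G} (hg : g ∈ zpowers c)
    (h : ∀ w : G, g ∈ zpowers w → w ∈ zpowers c) : ∃! C : Subgroup G, IsMaxCyclic C ∧ g ∈ C := by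
  have hle : ∀ D : Subgroup G, IsCyclic D → g ∈ D → D ≤ zpowers c := by
    intro D hD hgD
    obtain ⟨w, rfl⟩ := D.isCyclic_iff_exists_zpowers_eq_top.1 hD
    exact zpowers_le.2 (h w hgD)
  exact ⟨zpowers c, ⟨⟨inferInstance, fun D hD hcD => le_antisymm hcD (hle D hD (hcD hg))⟩, hg⟩,
    fun C ⟨⟨hC, hCmax⟩, hgC⟩ => hCmax _ inferInstance (hle C hC hgC)⟩

theorem Pi.not_isAddCyclic_int [Nontrivial ι] : ¬IsAddCyclic (ι → ℤ) := by
  classical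
  rintro ⟨w, hw⟩
  obtain ⟨i, j, hij⟩ := exists_pair_ne ι
  obtain ⟨p, hp⟩ := hw (Pi.single i (1 : ℤ))
  obtain ⟨q, hq⟩ := hw (Pi.single j (1 : ℤ))
  have h : q • (Pi.single i 1 : ι → ℤ) = p • (Pi.single j 1 : ι → ℤ) := by
    rw [← hp, ← hq, smul_smul, smul_smul, mul_comm]
  have hq0 : q = 0 := by simpa [hij] using congrFun h i
  simpa [hq0] using congrFun hq j

theorem Pi.exists_mem_zmultiples_forall_mem_zmultiples_int [Fintype ι] (a : ι → ℤ) (ha : a ≠ 0) :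
    ∃ a₀ : ι → ℤ, a ∈ AddSubgroup.zmultiples a₀ ∧
      ∀ w, a ∈ AddSubgroup.zmultiples w → w ∈ AddSubgroup.zmultiples a₀ := by
  set d := Finset.univ.gcd a
  have hdvd : ∀ i, d ∣ a i := fun i => Finset.gcd_dvd (Finset.mem_univ i)
  set a₀ : ι → ℤ := fun i => a i / d
  have hda₀ : d • a₀ = a := funext fun i => Int.mul_ediv_cancel' (hdvd i)
  refine ⟨a₀, AddSubgroup.mem_zmultiples_iff.2 ⟨d, hda₀⟩, fun w hw => ?_⟩
  obtain ⟨k, hkw⟩ := AddSubgroup.mem_zmultiples_iff.1 hw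
  have hk : k ≠ 0 := by
    rintro rfl
    exact ha (by rw [← hkw, zero_smul])
  obtain ⟨e, he⟩ : k ∣ d := Finset.dvd_gcd fun i _ => ⟨w i, by rw [← hkw]; rfl⟩
  refine ⟨e, zsmul_right_injective hk ?_⟩
  simp only [smul_smul, ← he, hda₀, hkw]

theorem Pi.existsUnique_isMaxCyclic_int [Fintype ι] (g : Multiplicative (ι → ℤ)) (hg : g ≠ 1) :
    ∃! C : Subgroup (Multiplicative (ι → ℤ)), IsMaxCyclic C ∧ g ∈ C :=
  let ⟨a₀, ha₀, h⟩ := Pi.exists_mem_zmultiples_forall_mem_zmultiples_int g.toAdd hg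
  existsUnique_isMaxCyclic_of_forall_mem_zpowers (c := .ofAdd a₀) ha₀ fun w => h w.toAdd

def addPowerGraphIsoPowerGraph (A : Type*) [AddGroup A] :
    addPowerGraph A ≃g powerGraph (Multiplicative A) :=
  ⟨Multiplicative.ofAdd, Iff.rfl⟩

theorem nonempty_addPowerGraph_pi_int_iso_model_nat [Fintype ι] [Nontrivial ι] :
    Nonempty (addPowerGraph (ι → ℤ) ≃g powerGraphModel ℕ) := by
  have : Countable (Multiplicative (ι → ℤ)) := inferInstanceAs (Countable (ι → ℤ))
  obtain ⟨e⟩ := nonempty_powerGraph_iso_model_nat (G := Multiplicative (ι → ℤ))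
    (fun _ hg => not_isOfFinOrder_of_isMulTorsionFree hg)
    (isCyclic_multiplicative_iff.not.2 Pi.not_isAddCyclic_int) Pi.existsUnique_isMaxCyclic_int
  exact ⟨(addPowerGraphIsoPowerGraph _).trans e⟩

/-- Any two countable, non-cyclic, torsion-free groups in which every
non-identity element lies in a unique maximal cyclic subgroup have isomorphic
power graphs; in particular the groups `ℤⁿ` for `n ≥ 2` have pairwise isomorphic
power graphs. -/
theorem stmt_13 :
    (∀ (G₁ : Type u) (G₂ : Type v) [Group G₁] [Group G₂] [Countable G₁] [Countable G₂],
      (∀ g : G₁, g ≠ 1 → ¬ IsOfFinOrder g) →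
      (∀ g : G₂, g ≠ 1 → ¬ IsOfFinOrder g) →
      ¬ IsCyclic G₁ → ¬ IsCyclic G₂ →
      (∀ g : G₁, g ≠ 1 → ∃! C : Subgroup G₁, IsMaxCyclic C ∧ g ∈ C) →
      (∀ g : G₂, g ≠ 1 → ∃! C : Subgroup G₂, IsMaxCyclic C ∧ g ∈ C) →
      Nonempty (powerGraph G₁ ≃g powerGraph G₂)) ∧
    (∀ m n : ℕ, 2 ≤ m → 2 ≤ n →
      Nonempty (addPowerGraph (Fin m → ℤ) ≃g addPowerGraph (Fin n → ℤ))) := by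
  refine ⟨fun G₁ G₂ _ _ _ _ htf₁ htf₂ hG₁ hG₂ hu₁ hu₂ => ?_, fun m n hm hn => ?_⟩
  · obtain ⟨e₁⟩ := nonempty_powerGraph_iso_model_nat htf₁ hG₁ hu₁
    obtain ⟨e₂⟩ := nonempty_powerGraph_iso_model_nat htf₂ hG₂ hu₂
    exact ⟨e₁.trans e₂.symm⟩
  · have := Fin.nontrivial_iff_two_le.2 hm
    have := Fin.nontrivial_iff_two_le.2 hn
    obtain ⟨e₁⟩ := nonempty_addPowerGraph_pi_int_iso_model_nat (ι := Fin m)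
    obtain ⟨e₂⟩ := nonempty_addPowerGraph_pi_int_iso_model_nat (ι := Fin n)
    exact ⟨e₁.trans e₂.symm⟩
end

section
/- For a nonzero rational number a, define φ_a : ℚ → ℚ by φ_a(x) = a²/x for x ≠ 0 and φ_a(0) = 0. Then φ_a is a bijection which is an automorphism of the power graph P(ℚ) of the additive group of rationals (x and y are adjacent in P(ℚ) if and only if φ_a(x) and φ_a(y) are), φ_a reverses all arcs of the directed power graph (there is an arc x → y if and only if there is an arc φ_a(y) → φ_a(x)), and φ_a maps the out-neighbourhood O(a) bijectively onto the in-neighbourhood I(a). -/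
/-- The map `φ_a : ℚ → ℚ`, `x ↦ a²/x` for `x ≠ 0`, `0 ↦ 0`. -/
def phi (a : ℚ) (x : ℚ) : ℚ := if x = 0 then 0 else a ^ 2 / x

/-- The out-neighbourhood of `x` in the directed power graph of `ℚ`. -/
def outSetQ (x : ℚ) : Set ℚ := {y | addPowArc x y}

/-- The in-neighbourhood of `x` in the directed power graph of `ℚ`. -/
def inSetQ (x : ℚ) : Set ℚ := {y | addPowArc y x}

lemma addPowerGraph_adj_iff {G : Type*} [AddGroup G] {x y : G} :
    (addPowerGraph G).Adj x y ↔ addPowArc x y ∨ addPowArc y x := by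
  constructor
  · rintro ⟨hxy, n, hn, h | h⟩
    · exact Or.inl ⟨hxy, n, hn, h⟩
    · exact Or.inr ⟨hxy.symm, n, hn, h⟩
  · rintro (⟨hxy, n, hn, h⟩ | ⟨hxy, n, hn, h⟩)
    · exact ⟨hxy, n, hn, Or.inl h⟩
    · exact ⟨hxy.symm, n, hn, Or.inr h⟩

lemma phi_self (a : ℚ) : phi a a = a := by
  by_cases ha : a = 0 <;> simp [phi, ha, sq]

section Phi

variable {a : ℚ}

lemma phi_involutive (ha : a ≠ 0) : Function.Involutive (phi a) := by
  intro x
  by_cases hx : x = 0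
  · simp [phi, hx]
  · have hφx : a ^ 2 / x ≠ 0 := div_ne_zero (pow_ne_zero 2 ha) hx
    simp only [phi, if_neg hx, if_neg hφx]
    field_simp

lemma phi_eq_zsmul_phi_zsmul (a x : ℚ) {n : ℤ} (hn : n ≠ 0) : phi a x = n • phi a (n • x) := by
  by_cases hx : x = 0
  · simp [phi, hx]
  · have hn' : (n : ℚ) ≠ 0 := Int.cast_ne_zero.mpr hn
    simp only [phi, zsmul_eq_mul, if_neg hx, if_neg (mul_ne_zero hn' hx)]
    field_simp

lemma addPowArc.phi (ha : a ≠ 0) {x y : ℚ} (h : addPowArc x y) :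
    addPowArc (phi a y) (phi a x) := by
  obtain ⟨hxy, n, hn, rfl⟩ := h
  exact ⟨fun h ↦ hxy ((phi_involutive ha).injective h).symm, n, hn,
    phi_eq_zsmul_phi_zsmul a x hn⟩

lemma addPowArc_phi_iff (ha : a ≠ 0) {x y : ℚ} :
    addPowArc (phi a y) (phi a x) ↔ addPowArc x y := by
  refine ⟨fun h ↦ ?_, addPowArc.phi ha⟩
  simpa only [phi_involutive ha _] using h.phi ha

end Phi

/-- For nonzero `a : ℚ`, the map `φ_a` is a bijection, an automorphism of the
power graph `P(ℚ)`, reverses all arcs of the directed power graph, and maps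
`O(a)` bijectively onto `I(a)`. -/
theorem stmt_14 (a : ℚ) (ha : a ≠ 0) :
    Function.Bijective (phi a) ∧
      (∀ x y : ℚ, (addPowerGraph ℚ).Adj x y ↔
        (addPowerGraph ℚ).Adj (phi a x) (phi a y)) ∧
      (∀ x y : ℚ, addPowArc x y ↔ addPowArc (phi a y) (phi a x)) ∧
      Set.BijOn (phi a) (outSetQ a) (inSetQ a) := by
  have hinv := phi_involutive ha
  refine ⟨hinv.bijective, fun x y ↦ ?_, fun x y ↦ (addPowArc_phi_iff ha).symm, ?_⟩
  · rw [addPowerGraph_adj_iff, addPowerGraph_adj_iff, addPowArc_phi_iff ha,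
      addPowArc_phi_iff ha, or_comm]
  · refine Set.InvOn.bijOn (f' := phi a) ⟨fun x _ ↦ hinv x, fun x _ ↦ hinv x⟩
      (fun x hx ↦ ?_) (fun y hy ↦ ?_)
    · have := (hx : addPowArc a x).phi ha
      rwa [phi_self] at this
    · have := (hy : addPowArc y a).phi ha
      rwa [phi_self] at this
end
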